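/- For every pair of measures μ, ν on [Δ]^d with equal total mass and every shift s ∈ ℤ^d, the earth mover distance satisfies ‖μ − ν‖_EMD ≤ O(√d) · ‖G_s(μ − ν)‖₁, where G_s is the concatenated randomly-shifted grid embedding with level-t vector scaled by 2^t. -/
import Mathlib


open scoped BigOperators Classical

/-- A point of the integer grid `[Δ]^d` (0-indexed). -/
abbrev GridPt (d Δ : ℕ) := Fin d → Fin Δ

/-- Euclidean distance between two grid points. -/
noncomputable def gdist {d Δ : ℕ} (i j : GridPt d Δ) : ℝ :=
  Real.sqrt (∑ a, ((i a : ℝ) - (j a : ℝ)) ^ 2)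

/-- Earth mover distance between the positive and negative parts of `μ - ν`:
the minimum cost of a transportation plan with marginals `(μ-ν)⁺` and `(μ-ν)⁻`. -/
noncomputable def emdDiff {d Δ : ℕ} (μ ν : GridPt d Δ → ℝ) : ℝ :=
  sInf {c : ℝ | ∃ f : GridPt d Δ → GridPt d Δ → ℝ,
    (∀ i j, 0 ≤ f i j) ∧
    (∀ i, ∑ j, f i j = max (μ i - ν i) 0) ∧
    (∀ j, ∑ i, f i j = max (ν j - μ j) 0) ∧
    c = ∑ i, ∑ j, f i j * gdist i j}

/-- The cell (at level `t`, with integer shift `s`) containing a grid point `i`: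
coordinates are floor-divided by the side length `2^t` after shifting. -/
def cellOf {d Δ : ℕ} (s : Fin d → ℤ) (t : ℕ) (i : GridPt d Δ) : Fin d → ℤ :=
  fun a => Int.fdiv (((i a : ℕ) : ℤ) + s a) (2 ^ t)

/-- `‖G_s μ‖₁`: the `L₁` norm of the concatenated grid embedding, where the level-`t`
cell-mass vector is scaled by `2^t`. -/
noncomputable def gsNorm {d Δ : ℕ} (ℓ : ℕ) (s : Fin d → ℤ) (μ : GridPt d Δ → ℝ) : ℝ :=
  ∑ t ∈ Finset.range (ℓ + 1), (2 : ℝ) ^ t *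
    ∑ c ∈ Finset.image (cellOf (Δ := Δ) s t) Finset.univ,
      |∑ i ∈ Finset.univ.filter (fun i => cellOf s t i = c), μ i|

section Auxiliary

open Finset

variable {X : Type*} [Fintype X]

/-- Division composition for integer (Euclidean) division with positive divisors. -/
lemma EMDaux.ediv_comp (a b c : ℤ) (hb : 0 < b) (hc : 0 < c) : a / b / c = a / (b * c) := by
  have hb0 : b ≠ 0 := hb.ne'
  have hc0 : c ≠ 0 := hc.ne'
  have hbc : b * c ≠ 0 := mul_ne_zero hb0 hc0
  set q := a / b with hq
  set r := a % b with hr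
  have ha : a = r + b * q := by
    have := Int.mul_ediv_add_emod a b; linarith
  have hq2 : q = q % c + c * (q / c) := by
    have := Int.mul_ediv_add_emod q c; linarith
  have key : a = (r + b * (q % c)) + (b * c) * (q / c) := by
    rw [ha]; nlinarith [hq2]
  have hr0 : 0 ≤ r := Int.emod_nonneg a hb0
  have hr1 : r < b := Int.emod_lt_of_pos a hb
  have hm0 : 0 ≤ q % c := Int.emod_nonneg q hc0
  have hm1 : q % c < c := Int.emod_lt_of_pos q hc
  have hsmall : 0 ≤ r + b * (q % c) := by positivity
  have hsmall2 : r + b * (q % c) < b * c := by nlinarith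
  rw [key, Int.add_mul_ediv_left _ _ hbc,
    Int.ediv_eq_zero_of_lt hsmall hsmall2, zero_add]

lemma EMDaux.gdist_nonneg {d Δ : ℕ} (i j : GridPt d Δ) : 0 ≤ gdist i j := Real.sqrt_nonneg _

lemma EMDaux.gdist_le_of_coord {d Δ : ℕ} (i j : GridPt d Δ) (B : ℝ) (hB : 0 ≤ B)
    (h : ∀ a, |(i a : ℝ) - (j a : ℝ)| ≤ B) : gdist i j ≤ Real.sqrt d * B := by
  have h1 : gdist i j ≤ Real.sqrt (∑ _a : Fin d, B ^ 2) := by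
    apply Real.sqrt_le_sqrt
    refine Finset.sum_le_sum fun a _ => ?_
    have := abs_le.mp (h a)
    exact sq_le_sq' (by linarith) (by linarith)
  have h2 : (∑ _a : Fin d, B ^ 2) = (d : ℝ) * B ^ 2 := by
    rw [Finset.sum_const, Finset.card_univ, Fintype.card_fin, nsmul_eq_mul]
  rw [h2] at h1
  rwa [Real.sqrt_mul (by positivity) _, Real.sqrt_sq hB] at h1

lemma EMDaux.int_div_bound (x y : ℤ) (m : ℤ) (hm : 0 < m) (h : x / m = y / m) :
    |x - y| ≤ m := by
  have hx := Int.mul_ediv_add_emod x m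
  have hy := Int.mul_ediv_add_emod y m
  have hx0 : 0 ≤ x % m := Int.emod_nonneg x hm.ne'
  have hx1 : x % m < m := Int.emod_lt_of_pos x hm
  have hy0 : 0 ≤ y % m := Int.emod_nonneg y hm.ne'
  have hy1 : y % m < m := Int.emod_lt_of_pos y hm
  rw [abs_le]
  constructor <;> nlinarith [h]

lemma EMDaux.coord_bound {d Δ : ℕ} (s : Fin d → ℤ) (t : ℕ) (i j : GridPt d Δ)
    (h : cellOf s t i = cellOf s t j) (a : Fin d) :
    |(i a : ℝ) - (j a : ℝ)| ≤ 2 ^ t := by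
  have hpos : (0 : ℤ) < 2 ^ t := by positivity
  have h' := congrFun h a
  unfold cellOf at h'
  rw [Int.fdiv_eq_ediv_of_nonneg _ hpos.le, Int.fdiv_eq_ediv_of_nonneg _ hpos.le] at h'
  have hb := EMDaux.int_div_bound _ _ _ hpos h'
  have heq : ((i a : ℕ) : ℤ) + s a - (((j a : ℕ) : ℤ) + s a)
      = ((i a : ℕ) : ℤ) - ((j a : ℕ) : ℤ) := by ring
  rw [heq] at hb
  rw [abs_le] at hb ⊢
  constructor
  · exact_mod_cast hb.1
  · exact_mod_cast hb.2

lemma EMDaux.cell_diameter {d Δ : ℕ} (s : Fin d → ℤ) (t : ℕ) (i j : GridPt d Δ)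
    (h : cellOf s t i = cellOf s t j) : gdist i j ≤ Real.sqrt d * 2 ^ t :=
  EMDaux.gdist_le_of_coord i j _ (by positivity) (EMDaux.coord_bound s t i j h)

lemma EMDaux.grid_diameter {d ℓ : ℕ} (i j : GridPt d (2 ^ ℓ)) :
    gdist i j ≤ Real.sqrt d * 2 ^ ℓ := by
  apply EMDaux.gdist_le_of_coord i j _ (by positivity)
  intro a
  have h1 : (i a : ℝ) < 2 ^ ℓ := by exact_mod_cast (i a).2
  have h2 : (j a : ℝ) < 2 ^ ℓ := by exact_mod_cast (j a).2
  have h3 : (0:ℝ) ≤ (i a : ℝ) := by positivity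
  have h4 : (0:ℝ) ≤ (j a : ℝ) := by positivity
  rw [abs_le]; constructor <;> linarith

lemma EMDaux.cellOf_zero_inj {d Δ : ℕ} (s : Fin d → ℤ) {i j : GridPt d Δ}
    (h : cellOf s 0 i = cellOf s 0 j) : i = j := by
  funext a
  have h' := congrFun h a
  unfold cellOf at h'
  rw [pow_zero, Int.fdiv_one, Int.fdiv_one] at h'
  have : ((i a : ℕ) : ℤ) = ((j a : ℕ) : ℤ) := by linarith
  exact Fin.ext (by exact_mod_cast this)

lemma EMDaux.cellOf_succ {d Δ : ℕ} (s : Fin d → ℤ) (t : ℕ) (i : GridPt d Δ) :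
    cellOf s (t + 1) i = (fun c : Fin d → ℤ => fun a => c a / 2) (cellOf s t i) := by
  funext a
  unfold cellOf
  dsimp only
  have h1 : (0:ℤ) ≤ 2 ^ t := by positivity
  have h2 : (0:ℤ) ≤ 2 ^ (t+1) := by positivity
  rw [Int.fdiv_eq_ediv_of_nonneg _ h2, Int.fdiv_eq_ediv_of_nonneg _ h1,
    EMDaux.ediv_comp _ _ _ (by positivity) (by norm_num), ← pow_succ]

/-- Sums over fibers of a composed map agree if they agree over fibers of the finer map. -/
lemma EMDaux.fiber_sum_comp {C C' : Type*} [DecidableEq C] [DecidableEq C'] (p : X → C) (q : C → C') (g h : X → ℝ)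
    (hgh : ∀ c, ∑ i ∈ univ.filter (fun i => p i = c), g i
             = ∑ i ∈ univ.filter (fun i => p i = c), h i) (c' : C') :
    ∑ i ∈ univ.filter (fun i => q (p i) = c'), g i
      = ∑ i ∈ univ.filter (fun i => q (p i) = c'), h i := by
  have key : ∀ g : X → ℝ, ∑ i ∈ univ.filter (fun i => q (p i) = c'), g i
      = ∑ c ∈ univ.image p,
          if q c = c' then (∑ i ∈ univ.filter (fun i => p i = c), g i) else 0 := by
    intro g
    rw [Finset.sum_filter]
    rw [← Finset.sum_fiberwise_of_maps_to (fun i _ => Finset.mem_image_of_mem p (mem_univ i))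
      (fun i => if q (p i) = c' then g i else 0)]
    refine Finset.sum_congr rfl fun c _ => ?_
    by_cases hqc : q c = c'
    · rw [if_pos hqc]
      refine Finset.sum_congr rfl fun i hi => ?_
      rw [(Finset.mem_filter.mp hi).2, hqc, if_pos rfl]
    · rw [if_neg hqc]
      refine Finset.sum_eq_zero fun i hi => ?_
      rw [(Finset.mem_filter.mp hi).2, if_neg hqc]
  rw [key g, key h]
  exact Finset.sum_congr rfl fun c _ => by rw [hgh c]

/-- One matching step within the cells of a partition map `P`. -/
lemma EMDaux.match_step {C : Type*} [DecidableEq C] (dist : X → X → ℝ) (P : X → C)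
    (u v : X → ℝ) (hu : ∀ i, 0 ≤ u i) (hv : ∀ i, 0 ≤ v i)
    (D : ℝ) (hD0 : 0 ≤ D) (hD : ∀ i j, P i = P j → dist i j ≤ D) :
    ∃ (f : X → X → ℝ) (u' v' : X → ℝ),
      (∀ i j, 0 ≤ f i j) ∧ (∀ i, 0 ≤ u' i) ∧ (∀ j, 0 ≤ v' j) ∧
      (∀ i, u' i + ∑ j, f i j = u i) ∧
      (∀ j, v' j + ∑ i, f i j = v j) ∧
      (∀ c, (∀ i, P i = c → u' i = 0) ∨ (∀ j, P j = c → v' j = 0)) ∧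
      (∀ c, ∑ i ∈ univ.filter (fun i => P i = c), (u' i - v' i)
          = ∑ i ∈ univ.filter (fun i => P i = c), (u i - v i)) ∧
      (∑ i, ∑ j, f i j * dist i j ≤ D * ∑ j, v j) := by
  set U : C → ℝ := fun c => ∑ i ∈ univ.filter (fun i => P i = c), u i with hU
  set V : C → ℝ := fun c => ∑ i ∈ univ.filter (fun i => P i = c), v i with hV
  have hU0 : ∀ c, 0 ≤ U c := fun c => Finset.sum_nonneg fun i _ => hu i
  have hV0 : ∀ c, 0 ≤ V c := fun c => Finset.sum_nonneg fun i _ => hv i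
  have huU : ∀ i, u i ≤ U (P i) := fun i =>
    Finset.single_le_sum (fun j _ => hu j) (by simp)
  have hvV : ∀ i, v i ≤ V (P i) := fun i =>
    Finset.single_le_sum (fun j _ => hv j) (by simp)
  set g : C → ℝ :=
    fun c => if U c = 0 ∨ V c = 0 then 0 else min (U c) (V c) / (U c * V c) with hg
  have hg0 : ∀ c, 0 ≤ g c := by
    intro c; rw [hg]; dsimp only
    split_ifs with h
    · exact le_refl 0
    · push_neg at h
      have h1 : 0 < U c := lt_of_le_of_ne (hU0 c) (Ne.symm h.1)
      have h2 : 0 < V c := lt_of_le_of_ne (hV0 c) (Ne.symm h.2)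
      positivity
  have hVg : ∀ c, V c * g c ≤ 1 := by
    intro c; rw [hg]; dsimp only
    split_ifs with h
    · simp
    · push_neg at h
      have h1 : 0 < U c := lt_of_le_of_ne (hU0 c) (Ne.symm h.1)
      have h2 : 0 < V c := lt_of_le_of_ne (hV0 c) (Ne.symm h.2)
      have : V c * (min (U c) (V c) / (U c * V c)) = min (U c) (V c) / U c := by
        field_simp
      rw [this]
      exact div_le_one_of_le₀ (min_le_left _ _) h1.le
  have hUg : ∀ c, U c * g c ≤ 1 := by
    intro c; rw [hg]; dsimp only
    split_ifs with h
    · simp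
    · push_neg at h
      have h1 : 0 < U c := lt_of_le_of_ne (hU0 c) (Ne.symm h.1)
      have h2 : 0 < V c := lt_of_le_of_ne (hV0 c) (Ne.symm h.2)
      have : U c * (min (U c) (V c) / (U c * V c)) = min (U c) (V c) / V c := by
        field_simp
      rw [this]
      exact div_le_one_of_le₀ (min_le_right _ _) h2.le
  set f : X → X → ℝ := fun i j => if P i = P j then u i * v j * g (P i) else 0 with hf
  set u' : X → ℝ := fun i => u i * (1 - V (P i) * g (P i)) with hu'
  set v' : X → ℝ := fun j => v j * (1 - U (P j) * g (P j)) with hv'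
  have hf0 : ∀ i j, 0 ≤ f i j := by
    intro i j; rw [hf]; dsimp only
    split_ifs with h
    · have := hg0 (P i); have := hu i; have := hv j; positivity
    · exact le_refl 0
  have hu'0 : ∀ i, 0 ≤ u' i := fun i => mul_nonneg (hu i) (by linarith [hVg (P i)])
  have hv'0 : ∀ j, 0 ≤ v' j := fun j => mul_nonneg (hv j) (by linarith [hUg (P j)])
  have hrow : ∀ i, ∑ j, f i j = u i * g (P i) * V (P i) := by
    intro i
    have h1 : ∀ j, f i j = if P j = P i then (u i * g (P i)) * v j else 0 := by
      intro j; rw [hf]; dsimp only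
      by_cases h : P i = P j
      · rw [if_pos h, if_pos h.symm]; ring
      · rw [if_neg h, if_neg (Ne.symm h)]
    simp_rw [h1]
    rw [← Finset.sum_filter, ← Finset.mul_sum]
  have hcol : ∀ j, ∑ i, f i j = v j * g (P j) * U (P j) := by
    intro j
    have h1 : ∀ i, f i j = if P i = P j then (v j * g (P j)) * u i else 0 := by
      intro i; rw [hf]; dsimp only
      by_cases h : P i = P j
      · rw [if_pos h, if_pos h, h]; ring
      · rw [if_neg h, if_neg h]
    simp_rw [h1]
    rw [← Finset.sum_filter, ← Finset.mul_sum]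
  have hmaru : ∀ i, u' i + ∑ j, f i j = u i := by
    intro i; rw [hrow, hu']; dsimp only; ring
  have hmarv : ∀ j, v' j + ∑ i, f i j = v j := by
    intro j; rw [hcol, hv']; dsimp only; ring
  refine ⟨f, u', v', hf0, hu'0, hv'0, hmaru, hmarv, ?_, ?_, ?_⟩
  · intro c
    by_cases hUc : U c = 0
    · left; intro i hi
      have : u i = 0 := le_antisymm (by rw [← hUc, ← hi]; exact huU i) (hu i)
      rw [hu']; dsimp only; rw [this, zero_mul]
    · by_cases hVc : V c = 0
      · right; intro j hj
        have : v j = 0 := le_antisymm (by rw [← hVc, ← hj]; exact hvV j) (hv j)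
        rw [hv']; dsimp only; rw [this, zero_mul]
      · have h1 : 0 < U c := lt_of_le_of_ne (hU0 c) (Ne.symm hUc)
        have h2 : 0 < V c := lt_of_le_of_ne (hV0 c) (Ne.symm hVc)
        have hgc : g c = min (U c) (V c) / (U c * V c) := by
          rw [hg]; dsimp only; rw [if_neg (by push_neg; exact ⟨hUc, hVc⟩)]
        by_cases hm : U c ≤ V c
        · left; intro i hi
          have : V c * g c = 1 := by
            rw [hgc, min_eq_left hm]; field_simp
          rw [hu']; dsimp only; rw [hi, this]; ring
        · right; intro j hj
          have : U c * g c = 1 := by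
            rw [hgc, min_eq_right (le_of_not_ge hm)]; field_simp
          rw [hv']; dsimp only; rw [hj, this]; ring
  · intro c
    rw [Finset.sum_sub_distrib, Finset.sum_sub_distrib]
    have hUe : U c = ∑ i ∈ univ.filter (fun i => P i = c), u i := rfl
    have hVe : V c = ∑ i ∈ univ.filter (fun i => P i = c), v i := rfl
    have h1 : ∑ i ∈ univ.filter (fun i => P i = c), u' i = (1 - V c * g c) * U c := by
      rw [hUe, Finset.mul_sum]
      refine Finset.sum_congr rfl fun i hi => ?_
      rw [hu']; dsimp only; rw [(Finset.mem_filter.mp hi).2]; ring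
    have h2 : ∑ i ∈ univ.filter (fun i => P i = c), v' i = (1 - U c * g c) * V c := by
      rw [hVe, Finset.mul_sum]
      refine Finset.sum_congr rfl fun i hi => ?_
      rw [hv']; dsimp only; rw [(Finset.mem_filter.mp hi).2]; ring
    rw [h1, h2, hUe, hVe]; ring
  · have step1 : ∑ i, ∑ j, f i j * dist i j ≤ ∑ i, ∑ j, f i j * D := by
      refine Finset.sum_le_sum fun i _ => Finset.sum_le_sum fun j _ => ?_
      by_cases h : P i = P j
      · exact mul_le_mul_of_nonneg_left (hD i j h) (hf0 i j)
      · have : f i j = 0 := by rw [hf]; dsimp only; rw [if_neg h]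
        rw [this, zero_mul, zero_mul]
    have step2 : ∑ i, ∑ j, f i j * D = D * ∑ j, ∑ i, f i j := by
      rw [Finset.sum_comm, Finset.mul_sum]
      refine Finset.sum_congr rfl fun j _ => ?_
      rw [Finset.mul_sum]
      exact Finset.sum_congr rfl fun i _ => by ring
    have step3 : ∑ j, ∑ i, f i j ≤ ∑ j, v j := by
      refine Finset.sum_le_sum fun j _ => ?_
      have := hmarv j; have := hv'0 j; linarith
    calc ∑ i, ∑ j, f i j * dist i j ≤ ∑ i, ∑ j, f i j * D := step1
      _ = D * ∑ j, ∑ i, f i j := step2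
      _ ≤ D * ∑ j, v j := mul_le_mul_of_nonneg_left step3 hD0

/-- After the level-`t` matching step the total residual is bounded by the level-`t`
cell-mass `L¹` norm. -/
lemma EMDaux.residual_bound {d Δ : ℕ} (s : Fin d → ℤ) (t : ℕ)
    (w u v : GridPt d Δ → ℝ) (hu0 : ∀ i, 0 ≤ u i) (hv0 : ∀ j, 0 ≤ v j)
    (hos : ∀ c, (∀ i, cellOf s t i = c → u i = 0) ∨ (∀ j, cellOf s t j = c → v j = 0))
    (hdiff : ∀ c, ∑ i ∈ univ.filter (fun i => cellOf s t i = c), (u i - v i)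
        = ∑ i ∈ univ.filter (fun i => cellOf s t i = c), w i) :
    ∑ j, v j ≤ ∑ c ∈ Finset.image (cellOf (Δ := Δ) s t) Finset.univ,
      |∑ i ∈ Finset.univ.filter (fun i => cellOf s t i = c), w i| := by
  rw [← Finset.sum_fiberwise_of_maps_to
    (fun i _ => Finset.mem_image_of_mem (cellOf s t) (mem_univ i)) v]
  refine Finset.sum_le_sum fun c _ => ?_
  have hsum := hdiff c
  rw [Finset.sum_sub_distrib] at hsum
  rcases hos c with h | h
  · have hu' : ∑ i ∈ univ.filter (fun i => cellOf s t i = c), u i = 0 :=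
      Finset.sum_eq_zero fun i hi => h i (Finset.mem_filter.mp hi).2
    have : ∑ i ∈ univ.filter (fun i => cellOf s t i = c), w i
        = -(∑ i ∈ univ.filter (fun i => cellOf s t i = c), v i) := by
      rw [← hsum, hu']; ring
    rw [this, abs_neg, abs_of_nonneg (Finset.sum_nonneg fun i _ => hv0 i)]
  · have hv' : ∑ i ∈ univ.filter (fun i => cellOf s t i = c), v i = 0 :=
      Finset.sum_eq_zero fun i hi => h i (Finset.mem_filter.mp hi).2
    rw [hv']
    exact abs_nonneg _

/-- The inductive construction of partial transportation plans, level by level. -/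
lemma EMDaux.build (d ℓ : ℕ) (s : Fin d → ℤ) (w : GridPt d (2 ^ ℓ) → ℝ) (t : ℕ) :
    ∃ (F : GridPt d (2 ^ ℓ) → GridPt d (2 ^ ℓ) → ℝ) (u v : GridPt d (2 ^ ℓ) → ℝ),
      (∀ i j, 0 ≤ F i j) ∧ (∀ i, 0 ≤ u i) ∧ (∀ j, 0 ≤ v j) ∧
      (∀ i, u i + ∑ j, F i j = max (w i) 0) ∧
      (∀ j, v j + ∑ i, F i j = max (-(w j)) 0) ∧
      (∀ c, (∀ i, cellOf s t i = c → u i = 0) ∨ (∀ j, cellOf s t j = c → v j = 0)) ∧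
      (∀ c, ∑ i ∈ univ.filter (fun i => cellOf s t i = c), (u i - v i)
          = ∑ i ∈ univ.filter (fun i => cellOf s t i = c), w i) ∧
      (∑ i, ∑ j, F i j * gdist i j ≤ Real.sqrt d * ∑ r ∈ Finset.range t, 2 ^ (r+1) *
        ∑ c ∈ Finset.image (cellOf (Δ := 2 ^ ℓ) s r) Finset.univ,
          |∑ i ∈ Finset.univ.filter (fun i => cellOf s r i = c), w i|) := by
  induction t with
  | zero =>
    refine ⟨fun _ _ => 0, fun i => max (w i) 0, fun j => max (-(w j)) 0,
      fun _ _ => le_refl 0, fun i => le_max_right _ _, fun j => le_max_right _ _,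
      by simp, by simp, ?_, ?_, by simp⟩
    · intro c
      by_cases hex : ∃ i₀ : GridPt d (2 ^ ℓ), cellOf s 0 i₀ = c
      · obtain ⟨i₀, hi₀⟩ := hex
        by_cases hw : 0 ≤ w i₀
        · right; intro j hj
          have hji : j = i₀ := EMDaux.cellOf_zero_inj s (hj.trans hi₀.symm)
          subst hji
          exact max_eq_right (neg_nonpos.mpr hw)
        · left; intro i hi
          have hii : i = i₀ := EMDaux.cellOf_zero_inj s (hi.trans hi₀.symm)
          subst hii
          exact max_eq_right (le_of_not_ge hw)
      · left; intro i hi; exact absurd ⟨i, hi⟩ hex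
    · intro c
      refine Finset.sum_congr rfl fun i _ => ?_
      show max (w i) 0 - max (-(w i)) 0 = w i
      rcases le_total (w i) 0 with h | h
      · rw [max_eq_right h, max_eq_left (by linarith)]; ring
      · rw [max_eq_left h, max_eq_right (by linarith)]; ring
  | succ t ih =>
    obtain ⟨F, u, v, hF0, hu0, hv0, hmu, hmv, hos, hdiff, hcost⟩ := ih
    obtain ⟨f, u', v', hf0, hu'0, hv'0, hmu', hmv', hos', hdiff', hcostf⟩ :=
      EMDaux.match_step gdist (cellOf s (t+1)) u v hu0 hv0
        (Real.sqrt d * 2 ^ (t+1)) (by positivity)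
        (fun i j h => EMDaux.cell_diameter s (t+1) i j h)
    refine ⟨fun i j => F i j + f i j, u', v',
      fun i j => add_nonneg (hF0 i j) (hf0 i j), hu'0, hv'0, ?_, ?_, hos', ?_, ?_⟩
    · intro i
      rw [Finset.sum_add_distrib]
      have h1 := hmu' i; have h2 := hmu i; linarith
    · intro j
      rw [Finset.sum_add_distrib]
      have h1 := hmv' j; have h2 := hmv j; linarith
    · intro c
      refine (hdiff' c).trans ?_
      have key := EMDaux.fiber_sum_comp (cellOf s t) (fun cc : Fin d → ℤ => fun a => cc a / 2)
        (fun i => u i - v i) w hdiff c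
      simp only [EMDaux.cellOf_succ s t]
      exact key
    · have hsplit : ∑ i, ∑ j, (F i j + f i j) * gdist i j
          = (∑ i, ∑ j, F i j * gdist i j) + ∑ i, ∑ j, f i j * gdist i j := by
        rw [← Finset.sum_add_distrib]
        refine Finset.sum_congr rfl fun i _ => ?_
        rw [← Finset.sum_add_distrib]
        exact Finset.sum_congr rfl fun j _ => by ring
      have hvle := EMDaux.residual_bound s t w u v hu0 hv0 hos hdiff
      have hstep : ∑ i, ∑ j, f i j * gdist i j
          ≤ Real.sqrt d * (2 ^ (t+1) *
            ∑ c ∈ Finset.image (cellOf (Δ := 2 ^ ℓ) s t) Finset.univ,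
              |∑ i ∈ Finset.univ.filter (fun i => cellOf s t i = c), w i|) := by
        refine hcostf.trans ?_
        rw [mul_assoc]
        refine mul_le_mul_of_nonneg_left ?_ (Real.sqrt_nonneg _)
        exact mul_le_mul_of_nonneg_left hvle (by positivity)
      rw [hsplit, Finset.sum_range_succ, mul_add]
      exact add_le_add hcost hstep

end Auxiliary

/-- Contraction bound for the EMD embedding: for all measures `μ, ν` on `[Δ]^d` with
equal total mass and every shift `s ∈ ℤ^d`,
`‖μ − ν‖_EMD ≤ O(√d) · ‖G_s(μ − ν)‖₁`. -/
theorem emd_embedding_contraction :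
    ∃ A : ℝ, 0 < A ∧ ∀ (d ℓ : ℕ) (s : Fin d → ℤ) (μ ν : GridPt d (2 ^ ℓ) → ℝ),
      (∀ i, 0 ≤ μ i) → (∀ i, 0 ≤ ν i) → (∑ i, μ i = ∑ i, ν i) →
      emdDiff μ ν ≤ A * Real.sqrt d * gsNorm ℓ s (fun i => μ i - ν i) := by
  classical
  refine ⟨2, by norm_num, fun d ℓ s μ ν hμ hν hsum => ?_⟩
  set w : GridPt d (2 ^ ℓ) → ℝ := fun i => μ i - ν i with hw
  have hw0 : ∑ i, w i = 0 := by
    have : ∑ i, (μ i - ν i) = 0 := by rw [Finset.sum_sub_distrib, hsum, sub_self]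
    exact this
  obtain ⟨F, u, v, hF0, hu0, hv0, hmu, hmv, hos, hdiff, hcost⟩ := EMDaux.build d ℓ s w ℓ
  obtain ⟨f, u', v', hf0, hu'0, hv'0, hmu', hmv', hos', hdiff', hcostf⟩ :=
    EMDaux.match_step gdist (fun _ : GridPt d (2 ^ ℓ) => ()) u v hu0 hv0
      (Real.sqrt d * 2 ^ ℓ) (by positivity)
      (fun i j _ => EMDaux.grid_diameter i j)
  -- the final residuals vanish
  have huv_sum : ∑ i, (u i - v i) = 0 := by
    have h1 : ∑ i, (u i - v i)
        = ∑ c ∈ Finset.image (cellOf (Δ := 2 ^ ℓ) s ℓ) Finset.univ,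
            ∑ i ∈ Finset.univ.filter (fun i => cellOf s ℓ i = c), (u i - v i) :=
      (Finset.sum_fiberwise_of_maps_to
        (fun i _ => Finset.mem_image_of_mem (cellOf s ℓ) (Finset.mem_univ i)) _).symm
    have h2 : ∑ i, w i
        = ∑ c ∈ Finset.image (cellOf (Δ := 2 ^ ℓ) s ℓ) Finset.univ,
            ∑ i ∈ Finset.univ.filter (fun i => cellOf s ℓ i = c), w i :=
      (Finset.sum_fiberwise_of_maps_to
        (fun i _ => Finset.mem_image_of_mem (cellOf s ℓ) (Finset.mem_univ i)) _).symm
    rw [h1, ← hw0, h2]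
    exact Finset.sum_congr rfl fun c _ => hdiff c
  have huv'_sum : ∑ i, (u' i - v' i) = 0 := by
    have h := hdiff' ()
    rw [Finset.filter_true_of_mem (fun x _ => rfl)] at h
    rw [h]; exact huv_sum
  have hres : (∀ i, u' i = 0) ∧ (∀ j, v' j = 0) := by
    rw [Finset.sum_sub_distrib] at huv'_sum
    rcases hos' () with h | h
    · have hu'z : ∀ i, u' i = 0 := fun i => h i rfl
      have hsv : ∑ j, v' j = 0 := by
        have : ∑ i, u' i = 0 := Finset.sum_eq_zero fun i _ => hu'z i
        linarith
      exact ⟨hu'z, fun j => (Finset.sum_eq_zero_iff_of_nonneg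
        (fun i _ => hv'0 i)).mp hsv j (Finset.mem_univ j)⟩
    · have hv'z : ∀ j, v' j = 0 := fun j => h j rfl
      have hsu : ∑ i, u' i = 0 := by
        have : ∑ j, v' j = 0 := Finset.sum_eq_zero fun j _ => hv'z j
        linarith
      exact ⟨fun i => (Finset.sum_eq_zero_iff_of_nonneg
        (fun i _ => hu'0 i)).mp hsu i (Finset.mem_univ i), hv'z⟩
  set Fs : GridPt d (2 ^ ℓ) → GridPt d (2 ^ ℓ) → ℝ := fun i j => F i j + f i j with hFs
  have hFs0 : ∀ i j, 0 ≤ Fs i j := fun i j => add_nonneg (hF0 i j) (hf0 i j)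
  have hrow : ∀ i, ∑ j, Fs i j = max (μ i - ν i) 0 := by
    intro i
    rw [hFs]; dsimp only
    rw [Finset.sum_add_distrib]
    have h1 := hmu' i; have h2 := hmu i; have h3 := hres.1 i
    have hwi : max (μ i - ν i) 0 = max (w i) 0 := rfl
    rw [hwi]; linarith
  have hcolm : ∀ j, ∑ i, Fs i j = max (ν j - μ j) 0 := by
    intro j
    rw [hFs]; dsimp only
    rw [Finset.sum_add_distrib]
    have h1 := hmv' j; have h2 := hmv j; have h3 := hres.2 j
    have hwj : max (ν j - μ j) 0 = max (-(w j)) 0 := by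
      show max (ν j - μ j) 0 = max (-(μ j - ν j)) 0
      rw [neg_sub]
    rw [hwj]; linarith
  -- total cost bound
  set S : ℕ → ℝ := fun t => ∑ c ∈ Finset.image (cellOf (Δ := 2 ^ ℓ) s t) Finset.univ,
      |∑ i ∈ Finset.univ.filter (fun i => cellOf s t i = c), w i| with hS
  have hS0 : ∀ t, 0 ≤ S t := fun t => Finset.sum_nonneg fun c _ => abs_nonneg _
  have hvle := EMDaux.residual_bound s ℓ w u v hu0 hv0 hos hdiff
  have hcost_total : ∑ i, ∑ j, Fs i j * gdist i j
      ≤ Real.sqrt d * (∑ r ∈ Finset.range ℓ, 2 ^ (r+1) * S r) + Real.sqrt d * (2 ^ ℓ * S ℓ) := by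
    have hsplit : ∑ i, ∑ j, Fs i j * gdist i j
        = (∑ i, ∑ j, F i j * gdist i j) + ∑ i, ∑ j, f i j * gdist i j := by
      rw [← Finset.sum_add_distrib]
      refine Finset.sum_congr rfl fun i _ => ?_
      rw [← Finset.sum_add_distrib]
      refine Finset.sum_congr rfl fun j _ => ?_
      rw [hFs]; ring
    have hstep : ∑ i, ∑ j, f i j * gdist i j ≤ Real.sqrt d * (2 ^ ℓ * S ℓ) := by
      refine hcostf.trans ?_
      rw [mul_assoc]
      refine mul_le_mul_of_nonneg_left ?_ (Real.sqrt_nonneg _)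
      exact mul_le_mul_of_nonneg_left hvle (by positivity)
    rw [hsplit]
    exact add_le_add hcost hstep
  have hfinal : Real.sqrt d * (∑ r ∈ Finset.range ℓ, 2 ^ (r+1) * S r)
      + Real.sqrt d * (2 ^ ℓ * S ℓ) ≤ 2 * Real.sqrt d * gsNorm ℓ s w := by
    have hgs : gsNorm ℓ s w = ∑ t ∈ Finset.range (ℓ + 1), (2:ℝ) ^ t * S t := rfl
    have h1 : ∑ r ∈ Finset.range ℓ, (2:ℝ) ^ (r+1) * S r + 2 ^ ℓ * S ℓ
        ≤ ∑ t ∈ Finset.range (ℓ + 1), (2:ℝ) ^ (t+1) * S t := by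
      rw [Finset.sum_range_succ]
      have : (2:ℝ) ^ ℓ * S ℓ ≤ 2 ^ (ℓ+1) * S ℓ := by
        refine mul_le_mul_of_nonneg_right ?_ (hS0 ℓ)
        exact pow_le_pow_right₀ (by norm_num) (by omega)
      linarith
    have h2 : ∑ t ∈ Finset.range (ℓ + 1), (2:ℝ) ^ (t+1) * S t
        = 2 * ∑ t ∈ Finset.range (ℓ + 1), (2:ℝ) ^ t * S t := by
      rw [Finset.mul_sum]
      exact Finset.sum_congr rfl fun t _ => by rw [pow_succ]; ring
    rw [hgs, ← mul_add]
    calc Real.sqrt d * (∑ r ∈ Finset.range ℓ, (2:ℝ) ^ (r+1) * S r + 2 ^ ℓ * S ℓ)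
        ≤ Real.sqrt d * (2 * ∑ t ∈ Finset.range (ℓ + 1), (2:ℝ) ^ t * S t) := by
          refine mul_le_mul_of_nonneg_left ?_ (Real.sqrt_nonneg _)
          rw [← h2]; exact h1
      _ = 2 * Real.sqrt d * ∑ t ∈ Finset.range (ℓ + 1), (2:ℝ) ^ t * S t := by ring
  -- conclude via the infimum
  have hmem : (∑ i, ∑ j, Fs i j * gdist i j) ∈
      {c : ℝ | ∃ f : GridPt d (2 ^ ℓ) → GridPt d (2 ^ ℓ) → ℝ,
        (∀ i j, 0 ≤ f i j) ∧
        (∀ i, ∑ j, f i j = max (μ i - ν i) 0) ∧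
        (∀ j, ∑ i, f i j = max (ν j - μ j) 0) ∧
        c = ∑ i, ∑ j, f i j * gdist i j} :=
    ⟨Fs, hFs0, hrow, hcolm, rfl⟩
  have hbdd : BddBelow {c : ℝ | ∃ f : GridPt d (2 ^ ℓ) → GridPt d (2 ^ ℓ) → ℝ,
        (∀ i j, 0 ≤ f i j) ∧
        (∀ i, ∑ j, f i j = max (μ i - ν i) 0) ∧
        (∀ j, ∑ i, f i j = max (ν j - μ j) 0) ∧
        c = ∑ i, ∑ j, f i j * gdist i j} := by
    refine ⟨0, fun c hc => ?_⟩
    obtain ⟨g, hg, _, _, rfl⟩ := hc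
    exact Finset.sum_nonneg fun i _ => Finset.sum_nonneg fun j _ =>
      mul_nonneg (hg i j) (EMDaux.gdist_nonneg i j)
  calc emdDiff μ ν ≤ ∑ i, ∑ j, Fs i j * gdist i j := csInf_le hbdd hmem
    _ ≤ Real.sqrt d * (∑ r ∈ Finset.range ℓ, 2 ^ (r+1) * S r)
        + Real.sqrt d * (2 ^ ℓ * S ℓ) := hcost_total
    _ ≤ 2 * Real.sqrt d * gsNorm ℓ s w := hfinal
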